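/- Every flat ancestral order frame (W,<) is isomorphic to an ω-sequence frame: the map sending each w ∈ W to its successor-sequence α_w is injective on each R(w)-class of interest and satisfies, for all w,u,x,y ∈ W: u ∈ R(w) iff α_u is a tail of α_w, and x <_w y iff the rank of the first occurrence of x in α_w is less than the rank of the first occurrence of y in α_w; hence {α_w : w ∈ W} with the tail order function is an ω-sequence frame isomorphic to (W,<). -/

import Mathlib

/-- Sentences of the language L: atoms p₀,p₁,…, negation, conjunction, and the
binary conditional `>` (written `cond`). -/
inductive Formula : Type
  | atom : ℕ → Formula
  | neg : Formula → Formula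
  | conj : Formula → Formula → Formula
  | cond : Formula → Formula → Formula
  deriving DecidableEq

namespace Formula

/-- Material implication, defined as usual: p → q := ¬(p ∧ ¬q). -/
def impl (p q : Formula) : Formula := (p.conj q.neg).neg
/-- Disjunction, defined as usual: p ∨ q := ¬(¬p ∧ ¬q). -/
def disj (p q : Formula) : Formula := (p.neg.conj q.neg).neg
/-- Material biconditional, defined as usual. -/
def biimp (p q : Formula) : Formula := (p.impl q).conj (q.impl p)
/-- □p abbreviates ¬p > p. -/
def box (p : Formula) : Formula := p.neg.cond p
/-- ◇p abbreviates ¬□¬p. -/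
def dia (p : Formula) : Formula := p.neg.box.neg
/-- ⊥ abbreviates p₀ ∧ ¬p₀. -/
def bot : Formula := (atom 0).conj (atom 0).neg

end Formula

/-- An order frame: a nonempty type of worlds `W` together with, for each world
`w`, a strict well-order `lt w` (writing `lt w x y` for `x <_w y`) of a subset of
`W` (the field of `lt w`: the relation is transitive, well-founded, and connected
on its field), such that `x <_w y` implies `w = x` or `w <_w x`. -/
structure OrderFrame (W : Type) : Type where
  nonempty : Nonempty W
  lt : W → W → W → Prop
  trans : ∀ w x y z, lt w x y → lt w y z → lt w x z
  wf : ∀ w, WellFounded (lt w)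
  connected : ∀ w x y, (∃ z, lt w x z ∨ lt w z x) → (∃ z, lt w y z ∨ lt w z y) →
      x ≠ y → lt w x y ∨ lt w y x
  center : ∀ w x y, lt w x y → x = w ∨ lt w w x

namespace OrderFrame

variable {W : Type}

/-- Accessibility: `v ∈ R(w)` where `R(w) = {w} ∪ {v : w <_w v}`. -/
def acc (F : OrderFrame W) (w v : W) : Prop := v = w ∨ F.lt w w v

/-- `x ≤_w y` iff `x, y ∈ R(w)` and not `y <_w x`. -/
def wkle (F : OrderFrame W) (w x y : W) : Prop :=
  F.acc w x ∧ F.acc w y ∧ ¬ F.lt w y x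

end OrderFrame

/-- Truth at a world of an order model: atoms via the valuation `V`, Booleans
classically, and `p > q` is true at `w` iff either no world in `R(w)` satisfies `p`,
or there is `y ∈ R(w)` satisfying `p ∧ q` such that no `x <_w y` satisfies `p`. -/
def Truth {W : Type} (F : OrderFrame W) (V : ℕ → Set W) : Formula → W → Prop
  | .atom n, w => w ∈ V n
  | .neg p, w => ¬ Truth F V p w
  | .conj p q, w => Truth F V p w ∧ Truth F V q w
  | .cond p q, w =>
      (∀ v, F.acc w v → ¬ Truth F V p v) ∨
      ∃ y, F.acc w y ∧ Truth F V p y ∧ Truth F V q y ∧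
        ∀ x, F.lt w x y → ¬ Truth F V p x

/-- A frame is semi-flat iff for all w,x,y,z: if x <_w y and (y ≤_w z or
z ∈ R(x)\R(w)), then y ≤_x z. -/
def SemiFlat {W : Type} (F : OrderFrame W) : Prop :=
  ∀ w x y z, F.lt w x y →
    (F.wkle w y z ∨ (F.acc x z ∧ ¬ F.acc w z)) → F.wkle x y z

/-- The accessibility relation of the frame is transitive. -/
def TransAcc {W : Type} (F : OrderFrame W) : Prop :=
  ∀ w u v, F.acc w u → F.acc u v → F.acc w v

/-- A frame is flat iff it is semi-flat and its accessibility relation is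
transitive. -/
def Flat {W : Type} (F : OrderFrame W) : Prop := SemiFlat F ∧ TransAcc F

/-- `v` is the successor of `w`: `v = w` if `R(w) = {w}`, and otherwise `v` is the
`<_w`-least element of `R(w) \ {w}`. -/
def OrderFrame.SuccRel {W : Type} (F : OrderFrame W) (w v : W) : Prop :=
  ((∀ u, F.acc w u → u = w) ∧ v = w) ∨
  (F.lt w w v ∧ ∀ u, F.lt w w u → u = v ∨ F.lt w v u)

/-- A frame is ancestral iff every world accessible from `w` can be obtained from
`w` by finitely many successor steps. -/
def Ancestral {W : Type} (F : OrderFrame W) : Prop :=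
  ∀ w v, F.acc w v → Relation.ReflTransGen F.SuccRel w v

/-- The `n`-th tail of an ω-sequence: σ[n:](m) = σ(n+m). -/
def seqTail {P : Type} (σ : ℕ → P) (n : ℕ) : ℕ → P := fun m => σ (n + m)

/-- The tail order on ω-sequences: τ ≺_σ ρ iff τ and ρ are tails of σ and the rank
(least index of occurrence as a tail) of τ in σ is less than that of ρ. -/
def TailLt {P : Type} (σ τ ρ : ℕ → P) : Prop :=
  ∃ m n : ℕ, IsLeast {k | seqTail σ k = τ} m ∧ IsLeast {k | seqTail σ k = ρ} n ∧
    m < n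

/-- The successor-sequence α_w of `w` relative to a successor function `s`: the
ω-sequence starting with `w` in which each element after the first is the successor
of the previous one. -/
def alphaSeq {W : Type} (s : W → W) (w : W) : ℕ → W := fun n => s^[n] w

/-!
The successor sequence `α_w` enumerates `R(w)`: transitivity of accessibility keeps it inside
`R(w)`, and ancestrality makes it exhaust `R(w)`. Semi-flatness forbids a world from lying
strictly between some `v` and its successor in any `<_w`, so every `<_w`-predecessor of `α_w(n)`
already occurs before position `n`, and `<_w` is the order of first occurrence in `α_w`. The
tails of `α_w` are again successor sequences and `w ↦ α_w` is injective (`α_w(0) = w`), which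
transfers everything to the tail order.
-/

theorem rel_iff_exists_isLeast_lt {α : Type*} {r : α → α → Prop} {σ : ℕ → α}
    (hrange : ∀ x y, r x y → y ∈ Set.range σ)
    (htotal : ∀ m n, σ m ≠ σ n → r (σ m) (σ n) ∨ r (σ n) (σ m))
    (hprefix : ∀ n z, r z (σ n) → ∃ m < n, σ m = z) {x y : α} :
    r x y ↔ ∃ m n, IsLeast {k | σ k = x} m ∧ IsLeast {k | σ k = y} n ∧ m < n := by
  classical
  constructor
  · intro hxy
    have hy : ∃ k, σ k = y := hrange x y hxy
    have hyn := Nat.isLeast_find hy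
    obtain ⟨m, hmn, rfl⟩ := hprefix _ x (hyn.1 ▸ hxy)
    have hx : ∃ k, σ k = σ m := ⟨m, rfl⟩
    exact ⟨_, _, Nat.isLeast_find hx, hyn, (Nat.find_min' hx rfl).trans_lt hmn⟩
  · rintro ⟨m, n, ⟨rfl, hm⟩, ⟨rfl, hn⟩, hmn⟩
    have hne : σ m ≠ σ n := fun h => hmn.ne (hm h.symm |>.antisymm (hn h))
    refine (htotal m n hne).resolve_right fun hnm => ?_
    obtain ⟨k, hkm, hk⟩ := hprefix m _ hnm
    exact (hn hk).not_gt (hkm.trans hmn)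

namespace OrderFrame

variable {W : Type} {F : OrderFrame W}

theorem lt_irrefl (w x : W) : ¬ F.lt w x x := by
  induction x using (F.wf w).induction with
  | _ x ih => exact fun h => ih x h h

theorem lt_asymm {w x y : W} (h : F.lt w x y) : ¬ F.lt w y x :=
  fun h' => lt_irrefl w x (F.trans w x y x h h')

theorem acc_of_lt_left {w x y : W} (h : F.lt w x y) : F.acc w x :=
  (F.center w x y h).imp id id

theorem acc_of_lt_right {w x y : W} (h : F.lt w x y) : F.acc w y := by
  rcases F.center w x y h with rfl | hwx
  exacts [Or.inr h, Or.inr (F.trans w w x y hwx h)]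

theorem not_lt_base (w x : W) : ¬ F.lt w x w := by
  intro h
  rcases F.center w x w h with rfl | hwx
  exacts [lt_irrefl x x h, lt_irrefl w w (F.trans w w x w hwx h)]

theorem lt_or_lt_of_ne {w x y : W} (hx : F.acc w x) (hy : F.acc w y) (hne : x ≠ y) :
    F.lt w x y ∨ F.lt w y x := by
  rcases hx with rfl | hx <;> rcases hy with rfl | hy
  exacts [absurd rfl hne, Or.inl hy, Or.inr hx,
    F.connected w x y ⟨w, Or.inr hx⟩ ⟨w, Or.inr hy⟩ hne]

theorem SuccRel.acc {w v : W} (h : F.SuccRel w v) : F.acc w v := by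
  rcases h with ⟨_, rfl⟩ | ⟨hwv, _⟩
  exacts [Or.inl rfl, Or.inr hwv]

theorem SuccRel.eq {w u v : W} (hu : F.SuccRel w u) (hv : F.SuccRel w v) : u = v := by
  rcases hu with ⟨hone, rfl⟩ | ⟨hwu, hu⟩ <;> rcases hv with ⟨hone', rfl⟩ | ⟨hwv, hv⟩
  · rfl
  · exact absurd (hone v (Or.inr hwv) ▸ hwv) (lt_irrefl _ _)
  · exact absurd (hone' u (Or.inr hwu) ▸ hwu) (lt_irrefl _ _)
  · by_contra hne
    have huv := (hu v hwv).resolve_left (Ne.symm hne)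
    have hvu := (hv u hwu).resolve_left hne
    exact lt_irrefl w u (F.trans w u v u huv hvu)

end OrderFrame

open OrderFrame

variable {W : Type} {F : OrderFrame W}

theorem SemiFlat.acc_of_lt (hsf : SemiFlat F) {w x y : W} (h : F.lt w x y) : F.acc x y :=
  (hsf w x y y h (Or.inl ⟨acc_of_lt_right h, acc_of_lt_right h, lt_irrefl w y⟩)).2.1

theorem SemiFlat.lt_of_lt_of_lt (hsf : SemiFlat F) {w x y z : W} (hxy : F.lt w x y)
    (hyz : F.lt w y z) : F.lt x y z := by
  obtain ⟨hy, hz, hzy⟩ :=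
    hsf w x y z hxy (Or.inl ⟨acc_of_lt_right hxy, acc_of_lt_right hyz, lt_asymm hyz⟩)
  have hne : y ≠ z := by
    rintro rfl
    exact lt_irrefl w y hyz
  exact (lt_or_lt_of_ne hy hz hne).resolve_right hzy

theorem SemiFlat.not_lt_of_succRel (hsf : SemiFlat F) {w v t z : W} (ht : F.SuccRel v t)
    (hvz : F.lt w v z) : ¬ F.lt w z t := by
  intro hzt
  have hvz' : F.lt v v z :=
    (hsf.acc_of_lt hvz).resolve_left fun h => lt_irrefl w v (h ▸ hvz)
  rcases ht with ⟨hone, -⟩ | ⟨-, hmin⟩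
  · exact lt_irrefl v v (hone z (Or.inr hvz') ▸ hvz')
  · rcases hmin z hvz' with rfl | htz
    · exact lt_irrefl w z hzt
    · exact lt_irrefl v z (F.trans v z t z (hsf.lt_of_lt_of_lt hvz hzt) htz)

section alphaSeq

variable {s : W → W}

theorem alphaSeq_succ (w : W) (n : ℕ) : alphaSeq s w (n + 1) = s (alphaSeq s w n) :=
  Function.iterate_succ_apply' s n w

theorem alphaSeq_injective : Function.Injective (alphaSeq s) :=
  fun _ _ h => congrFun h 0

theorem seqTail_alphaSeq (w : W) (n : ℕ) :
    seqTail (alphaSeq s w) n = alphaSeq s (alphaSeq s w n) := by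
  funext m
  simp only [seqTail, alphaSeq, ← Function.iterate_add_apply, Nat.add_comm]

theorem seqTail_alphaSeq_eq_iff {w z : W} {n : ℕ} :
    seqTail (alphaSeq s w) n = alphaSeq s z ↔ alphaSeq s w n = z := by
  rw [seqTail_alphaSeq, alphaSeq_injective.eq_iff]

theorem TransAcc.acc_alphaSeq (ht : TransAcc F) (hs : ∀ w, F.SuccRel w (s w)) (w : W)
    (n : ℕ) : F.acc w (alphaSeq s w n) := by
  induction n with
  | zero => exact Or.inl rfl
  | succ n ih => exact alphaSeq_succ w n ▸ ht w _ _ ih (hs _).acc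

theorem exists_alphaSeq_eq_of_reflTransGen (hs : ∀ w, F.SuccRel w (s w)) {w u : W}
    (h : Relation.ReflTransGen F.SuccRel w u) : ∃ n, alphaSeq s w n = u := by
  induction h with
  | refl => exact ⟨0, rfl⟩
  | tail _ hsucc ih =>
    obtain ⟨n, rfl⟩ := ih
    exact ⟨n + 1, (alphaSeq_succ w n).trans ((hs _).eq hsucc)⟩

theorem TransAcc.acc_iff_exists_alphaSeq_eq (ht : TransAcc F) (hanc : Ancestral F)
    (hs : ∀ w, F.SuccRel w (s w)) {w u : W} :
    F.acc w u ↔ ∃ n, alphaSeq s w n = u :=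
  ⟨fun h => exists_alphaSeq_eq_of_reflTransGen hs (hanc w u h),
    fun ⟨n, hn⟩ => hn ▸ ht.acc_alphaSeq hs w n⟩

theorem Flat.exists_lt_alphaSeq_eq (hflat : Flat F) (hs : ∀ w, F.SuccRel w (s w)) {w z : W}
    (n : ℕ) (hz : F.lt w z (alphaSeq s w n)) : ∃ m < n, alphaSeq s w m = z := by
  induction n generalizing z with
  | zero => exact absurd hz (not_lt_base w z)
  | succ n ih =>
    rw [alphaSeq_succ] at hz
    set v := alphaSeq s w n
    by_cases hne : z = v
    · exact ⟨n, n.lt_succ_self, hne.symm⟩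
    rcases lt_or_lt_of_ne (acc_of_lt_left hz) (hflat.2.acc_alphaSeq hs w n) hne with hzv | hvz
    · obtain ⟨m, hmn, hm⟩ := ih hzv
      exact ⟨m, hmn.trans n.lt_succ_self, hm⟩
    · exact absurd hz (hflat.1.not_lt_of_succRel (hs v) hvz)

theorem Flat.lt_iff_exists_isLeast_lt (hflat : Flat F) (hanc : Ancestral F)
    (hs : ∀ w, F.SuccRel w (s w)) {w x y : W} :
    F.lt w x y ↔ ∃ m n, IsLeast {k | alphaSeq s w k = x} m ∧
      IsLeast {k | alphaSeq s w k = y} n ∧ m < n :=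
  rel_iff_exists_isLeast_lt
    (fun _ _ h => (hflat.2.acc_iff_exists_alphaSeq_eq hanc hs).1 (acc_of_lt_right h))
    (fun m n hne => lt_or_lt_of_ne (hflat.2.acc_alphaSeq hs w m)
      (hflat.2.acc_alphaSeq hs w n) hne)
    (fun n _ => hflat.exists_lt_alphaSeq_eq hs n)

end alphaSeq

/-- every flat ancestral order frame (W,<) is isomorphic to an
ω-sequence frame via the map sending each world to its successor-sequence α_w:
the map is injective, its image is closed under tailhood, u ∈ R(w) iff α_u is a
tail of α_w, x <_w y iff the rank of the first occurrence of x in α_w is less than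
that of y, and the frame order corresponds to the tail order on the α-sequences. -/
theorem flat_ancestral_iso_omega_frame {W : Type} (F : OrderFrame W)
    (hflat : Flat F) (hanc : Ancestral F)
    (s : W → W) (hs : ∀ w, F.SuccRel w (s w)) :
    Function.Injective (alphaSeq s) ∧
    (∀ (w : W) (n : ℕ), ∃ u : W, seqTail (alphaSeq s w) n = alphaSeq s u) ∧
    (∀ w u : W, F.acc w u ↔ ∃ n : ℕ, alphaSeq s u = seqTail (alphaSeq s w) n) ∧
    (∀ w x y : W, F.lt w x y ↔
      ∃ m n : ℕ, IsLeast {k | alphaSeq s w k = x} m ∧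
        IsLeast {k | alphaSeq s w k = y} n ∧ m < n) ∧
    (∀ w x y : W, F.lt w x y ↔
      TailLt (alphaSeq s w) (alphaSeq s x) (alphaSeq s y)) := by
  refine ⟨alphaSeq_injective, fun w n => ⟨_, seqTail_alphaSeq w n⟩, fun w u => ?_,
    fun w x y => hflat.lt_iff_exists_isLeast_lt hanc hs, fun w x y => ?_⟩
  · simp only [hflat.2.acc_iff_exists_alphaSeq_eq hanc hs, eq_comm (a := alphaSeq s u),
      seqTail_alphaSeq_eq_iff]
  · simp only [hflat.lt_iff_exists_isLeast_lt hanc hs, TailLt, seqTail_alphaSeq_eq_iff]
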